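/- Let X be a complete length space, x ∈ X, k > 1 and L > 0, and suppose that for every r > L the natural inclusion-induced map G(x, r, kr) → π₁(X, x) is an isomorphism. Then for every r > L and every δ > L, the relative δ-group G(x, r, (k+1)r, δ) is trivial; that is, every loop based at x with image in the closed ball B̄_x(r) is homotopic, within the open ball B_x((k+1)r), to a finite product of δ-loops. -/

import Mathlib

open Metric unitInterval CategoryTheory
open scoped FundamentalGroupoid ENNReal Manifold

universe u

noncomputable section

/-- The length of a path in a pseudo-emetric space, as the total variation of the
parametrization. -/
def pathLength {X : Type u} [PseudoEMetricSpace X] {x y : X} (γ : Path x y) : ℝ≥0∞ :=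
  eVariationOn γ Set.univ

/-- A (pseudo-e)metric space is a *length space* if the distance between any two points is
the infimum of the lengths of paths joining them. -/
def IsLengthSpace (X : Type u) [PseudoEMetricSpace X] : Prop :=
  ∀ x y : X, edist x y = ⨅ γ : Path x y, pathLength γ

/-- Two loops are homotopic (rel endpoints) *within* the set `S` if there is a path homotopy
between them whose image is contained in `S`. -/
def HomotopicIn {X : Type u} [TopologicalSpace X] {x y : X} (γ₁ γ₂ : Path x y) (S : Set X) :
    Prop :=
  ∃ H : Path.Homotopy γ₁ γ₂, ∀ z : I × I, H z ∈ S

/-- A loop is nullhomotopic within the set `S`. -/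
def NullHomotopicIn {X : Type u} [TopologicalSpace X] {x : X} (γ : Path x x) (S : Set X) :
    Prop :=
  HomotopicIn γ (Path.refl x) S

/-- The homomorphism on fundamental groups induced by a continuous map. -/
def indHom {X Y : Type u} [TopologicalSpace X] [TopologicalSpace Y]
    (f : C(X, Y)) (x : X) : FundamentalGroup X x →* FundamentalGroup Y (f x) :=
  Functor.mapEnd (FundamentalGroupoid.mk x)
    (πₘ (TopCat.ofHom f))

/-- The class of a loop in the fundamental group. -/
def pathClass {X : Type u} [TopologicalSpace X] {x : X} (γ : Path x x) :
    FundamentalGroup X x :=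
  FundamentalGroup.fromPath ⟦γ⟧

/-- The basepoint `p` as a point of the closed ball `B̄_p(r)`. -/
def pcb {X : Type u} [MetricSpace X] (p : X) {r : ℝ} (h0 : 0 ≤ r) : closedBall p r :=
  ⟨p, mem_closedBall_self h0⟩

/-- The basepoint `p` as a point of the open ball `B_p(R)`. -/
def ctr {X : Type u} [MetricSpace X] (p : X) {R : ℝ} (hR : 0 < R) : ball p R :=
  ⟨p, mem_ball_self hR⟩

/-- The inclusion of the closed ball `B̄_p(r)` into the open ball `B_p(R)`, `r < R`. -/
def cbInclusion {X : Type u} [MetricSpace X] (p : X) {r R : ℝ} (h : r < R) :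
    C(closedBall p r, ball p R) :=
  ⟨fun z => ⟨z.1, mem_ball.mpr (lt_of_le_of_lt (mem_closedBall.mp z.2) h)⟩,
    Continuous.subtype_mk continuous_subtype_val _⟩

/-- The geometric semi-local fundamental group `G(p,r,R)`: the image of
`π₁(B̄_p(r), p) → π₁(B_p(R), p)`, as a subgroup of `π₁(B_p(R), p)`. -/
def G {X : Type u} [MetricSpace X] (p : X) {r R : ℝ} (h0 : 0 ≤ r) (hrR : r < R) :
    Subgroup (FundamentalGroup (ball p R) (ctr p (h0.trans_lt hrR))) :=
  (indHom (cbInclusion p hrR) (pcb p h0)).range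

/-- The homomorphism `π₁(B_p(R), p) → π₁(X, p)` induced by inclusion. -/
def toAmb {X : Type u} [MetricSpace X] (p : X) {R : ℝ} (hR : 0 < R) :
    FundamentalGroup (ball p R) (ctr p hR) →* FundamentalGroup X p :=
  indHom ⟨Subtype.val, continuous_subtype_val⟩ (ctr p hR)

/-- The homomorphism `π₁(B̄_p(r), p) → π₁(X, p)` induced by inclusion. -/
def cbToAmb {X : Type u} [MetricSpace X] (p : X) {r : ℝ} (h0 : 0 ≤ r) :
    FundamentalGroup (closedBall p r) (pcb p h0) →* FundamentalGroup X p :=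
  indHom ⟨Subtype.val, continuous_subtype_val⟩ (pcb p h0)

end

/-- A `δ`-loop based at `p`: a loop of the form `α * β * α⁻¹` where `β` is a closed path lying
in some ball of radius `δ` and `α` is a path from `p` to `β 0`. -/
def IsDeltaLoop {X : Type u} [MetricSpace X] {p : X} (δ : ℝ) (γ : Path p p) : Prop :=
  ∃ (z c : X) (α : Path p z) (β : Path z z),
    (∀ t, β t ∈ ball c δ) ∧ γ = (α.trans β).trans α.symm

/-- The concatenation of a finite list of loops based at `p`. -/
noncomputable def loopProd {X : Type u} [TopologicalSpace X] {p : X} (l : List (Path p p)) : Path p p :=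
  l.foldr Path.trans (Path.refl p)

/-- Triviality of the relative `δ`-group `G(x, r, R, δ)`: every loop based at `x` with image in
the closed ball `B̄_x(r)` is homotopic, within the open ball `B_x(R)`, to a finite product of
`δ`-loops. -/
def DeltaTrivial {X : Type u} [MetricSpace X] (x : X) (r R δ : ℝ) : Prop :=
  ∀ γ : Path x x, (∀ t, γ t ∈ closedBall x r) →
    ∃ l : List (Path x x), (∀ γ' ∈ l, IsDeltaLoop δ γ') ∧
      HomotopicIn γ (loopProd l) (ball x R)

/-! Choose `L < r' < min δ r`. Surjectivity of `G(x, r', kr') → π₁(X, x)` represents the class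
of `γ` by a loop `β` in `B̄_x(r')`; lying in a ball of radius `δ`, `β` is a `δ`-loop (with constant
tail). Both `γ` and `β` lie in `B̄_x(r)` and have the same class in `π₁(X, x)`, so injectivity of
`G(x, r, kr) → π₁(X, x)` makes them homotopic in `B_x(kr) ⊆ B_x((k+1)r)`. -/

open Function

section Loops

variable {X Y : Type u} [TopologicalSpace X] [TopologicalSpace Y]

lemma pathClass_eq_iff {x : X} {γ₁ γ₂ : Path x x} :
    pathClass γ₁ = pathClass γ₂ ↔ γ₁.Homotopic γ₂ :=
  Path.Homotopic.Quotient.eq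

lemma pathClass_surjective (x : X) : Surjective (pathClass (x := x)) :=
  Path.Homotopic.Quotient.mk_surjective

lemma indHom_pathClass (f : C(X, Y)) (x : X) (γ : Path x x) :
    indHom f x (pathClass γ) = pathClass (γ.map f.continuous) :=
  (Path.Homotopic.Quotient.mk_map γ f).symm

def Path.codRestrict {a b : X} {S : Set X} (γ : Path a b) (h : ∀ t, γ t ∈ S) :
    Path (⟨a, γ.source ▸ h 0⟩ : S) ⟨b, γ.target ▸ h 1⟩ where
  toFun t := ⟨γ t, h t⟩
  continuous_toFun := γ.continuous.subtype_mk _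
  source' := Subtype.ext γ.source
  target' := Subtype.ext γ.target

lemma HomotopicIn.mono {a b : X} {γ₁ γ₂ : Path a b} {S T : Set X} (h : HomotopicIn γ₁ γ₂ S)
    (hST : S ⊆ T) : HomotopicIn γ₁ γ₂ T :=
  let ⟨H, hH⟩ := h
  ⟨H, fun z => hST (hH z)⟩

lemma homotopicIn_of_homotopic_codRestrict {a b : X} {S : Set X} {γ₁ γ₂ : Path a b}
    {h₁ : ∀ t, γ₁ t ∈ S} {h₂ : ∀ t, γ₂ t ∈ S}
    (h : (γ₁.codRestrict h₁).Homotopic (γ₂.codRestrict h₂)) : HomotopicIn γ₁ γ₂ S :=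
  let ⟨H⟩ := h
  ⟨(H.map ⟨Subtype.val, continuous_subtype_val⟩).cast rfl rfl, fun z => (H z).2⟩

end Loops

section SemiLocal

variable {X : Type u} [MetricSpace X] {x : X} {r R : ℝ}

noncomputable def semiLocalClass (h0 : 0 ≤ r) (hrR : r < R) (γ : Path x x)
    (hγ : ∀ t, γ t ∈ closedBall x r) : G x h0 hrR :=
  ⟨indHom (cbInclusion x hrR) (pcb x h0) (pathClass (γ.codRestrict hγ)), _, rfl⟩

lemma toAmb_semiLocalClass (h0 : 0 ≤ r) (hrR : r < R) (γ : Path x x)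
    (hγ : ∀ t, γ t ∈ closedBall x r) :
    ((toAmb x (h0.trans_lt hrR)).comp (G x h0 hrR).subtype) (semiLocalClass h0 hrR γ hγ) =
      pathClass γ :=
  -- induced maps act on representatives; restricting and then including gives back `γ`
  rfl

lemma exists_homotopic_mem_closedBall_of_surjective (h0 : 0 ≤ r) (hrR : r < R)
    (hsurj : Surjective ((toAmb x (h0.trans_lt hrR)).comp (G x h0 hrR).subtype))
    (γ : Path x x) : ∃ β : Path x x, (∀ t, β t ∈ closedBall x r) ∧ β.Homotopic γ := by
  obtain ⟨⟨_, c, rfl⟩, hc⟩ := hsurj (pathClass γ)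
  obtain ⟨β, rfl⟩ := pathClass_surjective _ c
  exact ⟨β.map continuous_subtype_val, fun t => (β t).2,
    pathClass_eq_iff.1 ((toAmb_semiLocalClass h0 hrR _ fun t => (β t).2).symm.trans hc)⟩

lemma homotopicIn_ball_of_injective (h0 : 0 ≤ r) (hrR : r < R)
    (hinj : Injective ((toAmb x (h0.trans_lt hrR)).comp (G x h0 hrR).subtype))
    {γ₁ γ₂ : Path x x} (hγ₁ : ∀ t, γ₁ t ∈ closedBall x r) (hγ₂ : ∀ t, γ₂ t ∈ closedBall x r)
    (h : γ₁.Homotopic γ₂) : HomotopicIn γ₁ γ₂ (ball x R) := by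
  have hG : semiLocalClass h0 hrR γ₁ hγ₁ = semiLocalClass h0 hrR γ₂ hγ₂ :=
    hinj (by rw [toAmb_semiLocalClass, toAmb_semiLocalClass, pathClass_eq_iff.2 h])
  have hball := congrArg Subtype.val hG
  simp only [semiLocalClass] at hball
  exact homotopicIn_of_homotopic_codRestrict (pathClass_eq_iff.1 hball)

end SemiLocal

section DeltaLoops

variable {X : Type u} [MetricSpace X] {x : X}

lemma isDeltaLoop_conj_refl {δ : ℝ} {c : X} {β : Path x x} (hβ : ∀ t, β t ∈ ball c δ) :
    IsDeltaLoop δ (((Path.refl x).trans β).trans (Path.refl x).symm) :=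
  ⟨x, c, _, β, hβ, rfl⟩

lemma loopProd_conj_refl_homotopic (β : Path x x) :
    (loopProd [((Path.refl x).trans β).trans (Path.refl x).symm]).Homotopic β := by
  rw [Path.refl_symm]
  exact ((Path.Homotopic.trans_refl _).trans (Path.Homotopic.trans_refl _)).trans
    (Path.Homotopic.refl_trans β)

lemma loopProd_conj_refl_mem {S : Set X} {β : Path x x} (hβ : ∀ t, β t ∈ S)
    (t : I) : loopProd [((Path.refl x).trans β).trans (Path.refl x).symm] t ∈ S := by
  revert t
  simp only [← Set.range_subset_iff, loopProd, List.foldr, Path.trans_range, Path.symm_range,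
    Path.refl_range] at hβ ⊢
  simp [hβ]

end DeltaLoops

theorem stmt8 {X : Type u} [MetricSpace X] (x : X) (k L : ℝ) (hk : 1 < k) (hL : 0 < L)
    (hiso : ∀ r, ∀ hr : L < r,
      Function.Bijective
        ((toAmb x ((hL.trans hr).trans (by nlinarith : r < k * r))).comp
          (G x (hL.trans hr).le (by nlinarith : r < k * r)).subtype)) :
    ∀ r, L < r → ∀ δ, L < δ → DeltaTrivial x r ((k + 1) * r) δ := by
  intro r hr δ hδ γ hγ
  obtain ⟨r', hLr', hr'⟩ := exists_between (lt_min hδ hr)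
  obtain ⟨β, hβ, hβγ⟩ := exists_homotopic_mem_closedBall_of_surjective _ _ (hiso r' hLr').2 γ
  have hβδ : ∀ t, β t ∈ ball x δ := fun t =>
    closedBall_subset_ball (hr'.trans_le (min_le_left _ _)) (hβ t)
  have hβr : ∀ t, β t ∈ closedBall x r := fun t =>
    closedBall_subset_closedBall (hr'.trans_le (min_le_right _ _)).le (hβ t)
  have hkr : k * r ≤ (k + 1) * r := by linarith
  refine ⟨[_], List.forall_mem_singleton.2 (isDeltaLoop_conj_refl hβδ), ?_⟩
  exact (homotopicIn_ball_of_injective _ _ (hiso r hr).1 hγ (loopProd_conj_refl_mem hβr)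
    (hβγ.symm.trans (loopProd_conj_refl_homotopic β).symm)).mono (ball_subset_ball hkr)
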